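/- For 1 < p < 3, the hypergeometric function Υ(x) = ₂F₁(a_p, b_p, c_p; x), with a_p, b_p as above and c_p = p/(p-1), defined by the power series Σ_{k≥0} ((a_p)_k (b_p)_k / (c_p)_k) x^k/k!, satisfies Υ(x) > 0, Υ'(x) < 0, and Υ''(x) < 0 for all x ∈ (0,1). -/

import Mathlib

open Real Filter

/-- Pochhammer symbol `(a)_k`. -/
noncomputable def poch (a : ℝ) (k : ℕ) : ℝ := ∏ i ∈ Finset.range k, (a + i)

/-- The Gauss hypergeometric series `₂F₁(a,b,c;x)`. -/
noncomputable def hyp (a b c x : ℝ) : ℝ :=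
  ∑' k : ℕ, poch a k * poch b k / poch c k * x ^ k / (Nat.factorial k : ℝ)

noncomputable def ap (p : ℝ) : ℝ :=
  (3 - p + Real.sqrt (4 + 12 * (p - 1) - 3 * (p - 1) ^ 2)) / (4 * (p - 1))

noncomputable def bp (p : ℝ) : ℝ :=
  (3 - p - Real.sqrt (4 + 12 * (p - 1) - 3 * (p - 1) ^ 2)) / (4 * (p - 1))

noncomputable def cp (p : ℝ) : ℝ := p / (p - 1)

/-- `Υ(x) = ₂F₁(a_p, b_p, c_p; x)`. -/
noncomputable def Ups (p x : ℝ) : ℝ := hyp (ap p) (bp p) (cp p) x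

/-! Υ is Mathlib's `₂F₁ a b c` with `a > 0`, `-1 < b < 0` and `c = a + b + 3/2`.
Differentiating term by term gives `Υ' = (ab/c) ₂F₁(a+1, b+1, c+1)` and
`Υ'' = (ab/c) ((a+1)(b+1)/(c+1)) ₂F₁(a+2, b+2, c+2)`; the shifted series have positive
coefficients, hence are `≥ 1` on `[0, 1)`, and `ab < 0` makes `Υ'` and `Υ''` negative.
Positivity of `Υ` then comes from the hypergeometric equation
`ab Υ = x(1-x) Υ'' + (c - (a+b+1)x) Υ'`, whose right side is negative on `(0, 1)` since
`c ≥ a + b + 1 > 0`. -/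

open Set

theorem hasDerivAt_tsum_mul_pow {u : ℕ → ℝ} {r x : ℝ}
    (hu : Summable fun k : ℕ => (k + 1) * |u (k + 1)| * r ^ k) (hx : |x| < r) :
    HasDerivAt (fun y => ∑' k, u k * y ^ k) (∑' k : ℕ, (k + 1) * u (k + 1) * x ^ k) x := by
  have hbound : Summable fun n : ℕ => n * |u n| * r ^ (n - 1) :=
    (summable_nat_add_iff 1).mp (by simpa using hu)
  have hx' : x ∈ Ioo (-r) r := abs_lt.mp hx
  have hderiv := hasDerivAt_tsum_of_isPreconnected hbound isOpen_Ioo isPreconnected_Ioo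
    (g := fun n y => u n * y ^ n) (g' := fun n y => u n * (n * y ^ (n - 1)))
    (fun n y _ => (hasDerivAt_pow n y).const_mul (u n))
    (fun n y hy => by
      have hy : |y| ≤ r := abs_le.mpr ⟨hy.1.le, hy.2.le⟩
      rw [Real.norm_eq_abs, abs_mul, abs_mul, abs_pow, Nat.abs_cast]
      have := pow_le_pow_left₀ (abs_nonneg y) hy (n - 1)
      nlinarith [abs_nonneg (u n), mul_nonneg (abs_nonneg (u n)) (Nat.cast_nonneg (α := ℝ) n)])
    (show (0 : ℝ) ∈ Ioo (-r) r by constructor <;> linarith [abs_nonneg x])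
    (summable_of_ne_finset_zero (s := {0}) fun n hn => by simp_all) hx'
  refine hderiv.congr_deriv ?_
  rw [tsum_eq_zero_add']
  · simp only [Nat.cast_zero, zero_mul, mul_zero, zero_add, Nat.add_sub_cancel, Nat.cast_succ]
    exact tsum_congr fun k => by ring
  · refine .of_norm_bounded (hbound.comp_injective (add_left_injective 1)) fun n => ?_
    simp only [Function.comp_apply, Nat.add_sub_cancel, Real.norm_eq_abs, abs_mul, abs_pow,
      Nat.abs_cast]
    have := pow_le_pow_left₀ (abs_nonneg x) hx.le n
    have h0 : (0 : ℝ) ≤ |u (n + 1)| * ((n + 1 : ℕ) : ℝ) := by positivity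
    nlinarith

theorem HasSum.mul_pow_of_succ {g : ℕ → ℝ} {x s : ℝ}
    (hg : HasSum (fun k => g (k + 1) * x ^ k) s) (h0 : g 0 = 0) :
    HasSum (fun k => g k * x ^ k) (x * s) := by
  refine (hasSum_nat_add_iff' 1).mp ?_
  simp only [Finset.range_one, Finset.sum_singleton, h0, zero_mul, sub_zero]
  exact (hg.mul_left x).congr_fun fun k => by ring

theorem poch_eq_eval_ascPochhammer (a : ℝ) (k : ℕ) :
    poch a k = (ascPochhammer ℝ k).eval a := by
  induction k with
  | zero => simp [poch]
  | succ k ih => rw [poch, Finset.prod_range_succ, ← poch, ih, ascPochhammer_succ_eval]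

theorem hyp_eq_ordinaryHypergeometric (a b c : ℝ) : hyp a b c = ordinaryHypergeometric a b c := by
  ext x
  rw [hyp, ordinaryHypergeometric, ordinaryHypergeometric_sum_eq]
  refine tsum_congr fun k => ?_
  simp only [poch_eq_eval_ascPochhammer, smul_eq_mul]
  ring

section Coefficients

variable {𝕂 : Type*} [Field 𝕂] [CharZero 𝕂]

theorem succ_mul_ordinaryHypergeometricCoefficient_succ (a b c : 𝕂) (k : ℕ) :
    (k + 1) * ordinaryHypergeometricCoefficient a b c (k + 1) =
      a * b / c * ordinaryHypergeometricCoefficient (a + 1) (b + 1) (c + 1) k := by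
  have hk : (k + 1 : 𝕂) ≠ 0 := by exact_mod_cast k.succ_ne_zero
  simp only [ordinaryHypergeometricCoefficient, ascPochhammer_succ_left, Polynomial.eval_mul,
    Polynomial.eval_X, Polynomial.eval_comp, Polynomial.eval_add, Polynomial.eval_one,
    Nat.factorial_succ, Nat.cast_mul, Nat.cast_succ, mul_inv, div_eq_mul_inv]
  field_simp

theorem ordinaryHypergeometricCoefficient_succ_recurrence {c : 𝕂} (a b : 𝕂) {k : ℕ}
    (hc : c + k ≠ 0) :
    (k + 1) * (c + k) * ordinaryHypergeometricCoefficient a b c (k + 1) =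
      (a + k) * (b + k) * ordinaryHypergeometricCoefficient a b c k := by
  have hk : (k + 1 : 𝕂) ≠ 0 := by exact_mod_cast k.succ_ne_zero
  simp only [ordinaryHypergeometricCoefficient, ascPochhammer_succ_eval, Nat.factorial_succ,
    Nat.cast_mul, Nat.cast_succ, mul_inv]
  field_simp

end Coefficients

def AvoidNonposInts (a b c : ℝ) : Prop :=
  ∀ k : ℕ, (k : ℝ) ≠ -a ∧ (k : ℝ) ≠ -b ∧ (k : ℝ) ≠ -c

theorem avoidNonposInts_of_neg_one_lt {a b c : ℝ} (ha : -1 < a) (hb : -1 < b) (hc : -1 < c)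
    (ha0 : a ≠ 0) (hb0 : b ≠ 0) (hc0 : c ≠ 0) : AvoidNonposInts a b c := by
  have key : ∀ {s : ℝ}, -1 < s → s ≠ 0 → ∀ k : ℕ, (k : ℝ) ≠ -s := by
    intro s hs hs0 k hk
    rcases k with _ | k
    · exact hs0 (by simpa using hk.symm)
    · push_cast at hk; linarith [(k.cast_nonneg : (0 : ℝ) ≤ k)]
  exact fun k => ⟨key ha ha0 k, key hb hb0 k, key hc hc0 k⟩

namespace AvoidNonposInts

variable {a b c x : ℝ} (h : AvoidNonposInts a b c)
include h

theorem add_one : AvoidNonposInts (a + 1) (b + 1) (c + 1) := fun k => by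
  obtain ⟨ha, hb, hc⟩ := h (k + 1)
  push_cast at ha hb hc
  exact ⟨fun e => ha (by linarith), fun e => hb (by linarith), fun e => hc (by linarith)⟩

theorem radius_ordinaryHypergeometricSeries : (ordinaryHypergeometricSeries ℝ a b c).radius = 1 :=
  ordinaryHypergeometricSeries_radius_eq_one ℝ a b c h

theorem hasSum_ordinaryHypergeometric (hx : |x| < 1) :
    HasSum (fun k => ordinaryHypergeometricCoefficient a b c k * x ^ k)
      (ordinaryHypergeometric a b c x) := by
  have hmem : x ∈ Metric.eball (0 : ℝ) (ordinaryHypergeometricSeries ℝ a b c).radius := by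
    rw [h.radius_ordinaryHypergeometricSeries, Metric.mem_eball, edist_zero_right,
      Real.enorm_eq_ofReal_abs]
    exact ENNReal.ofReal_lt_one.mpr hx
  have hsum := (ordinaryHypergeometricSeries ℝ a b c).hasSum hmem
  simp only [ordinaryHypergeometricSeries_apply_eq, smul_eq_mul] at hsum
  exact hsum

theorem summable_abs_coeff_mul_pow {r : ℝ} (hr0 : 0 ≤ r) (hr : r < 1) :
    Summable fun k => |ordinaryHypergeometricCoefficient a b c k| * r ^ k := by
  lift r to NNReal using hr0
  have := (ordinaryHypergeometricSeries ℝ a b c).summable_norm_mul_pow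
    (by rw [h.radius_ordinaryHypergeometricSeries]; exact_mod_cast hr)
  simpa [ordinaryHypergeometricSeries, FormalMultilinearSeries.ofScalars_norm] using this

theorem hasDerivAt_ordinaryHypergeometric (hx : |x| < 1) :
    HasDerivAt (ordinaryHypergeometric a b c)
      (a * b / c * ordinaryHypergeometric (a + 1) (b + 1) (c + 1) x) x := by
  obtain ⟨r, hxr, hr1⟩ := exists_between hx
  have hsum : Summable fun k : ℕ =>
      (k + 1) * |ordinaryHypergeometricCoefficient a b c (k + 1)| * r ^ k := by
    refine ((h.add_one.summable_abs_coeff_mul_pow ((abs_nonneg x).trans hxr.le) hr1).mul_left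
      |a * b / c|).congr fun k => ?_
    rw [show (k + 1 : ℝ) * |ordinaryHypergeometricCoefficient a b c (k + 1)| =
        |(k + 1) * ordinaryHypergeometricCoefficient a b c (k + 1)| by
          rw [abs_mul (k + 1 : ℝ), abs_of_nonneg (by positivity : (0 : ℝ) ≤ k + 1)],
      succ_mul_ordinaryHypergeometricCoefficient_succ, abs_mul (a * b / c)]
    ring
  have hderiv := hasDerivAt_tsum_mul_pow hsum hxr
  simp only [ordinaryHypergeometric_eq_tsum, smul_eq_mul, ← tsum_mul_left] at hderiv ⊢
  refine hderiv.congr_deriv (tsum_congr fun k => ?_)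
  rw [succ_mul_ordinaryHypergeometricCoefficient_succ]
  ring

theorem deriv_ordinaryHypergeometric (hx : |x| < 1) :
    deriv (ordinaryHypergeometric a b c) x =
      a * b / c * ordinaryHypergeometric (a + 1) (b + 1) (c + 1) x :=
  (h.hasDerivAt_ordinaryHypergeometric hx).deriv

theorem deriv_deriv_ordinaryHypergeometric (hx : |x| < 1) :
    deriv (deriv (ordinaryHypergeometric a b c)) x =
      a * b / c * ((a + 1) * (b + 1) / (c + 1) *
        ordinaryHypergeometric (a + 2) (b + 2) (c + 2) x) := by
  have hderiv : deriv (ordinaryHypergeometric a b c) =ᶠ[nhds x]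
      fun y => a * b / c * ordinaryHypergeometric (a + 1) (b + 1) (c + 1) y := by
    filter_upwards [(isOpen_lt continuous_abs continuous_const).mem_nhds hx] with y hy
    exact h.deriv_ordinaryHypergeometric hy
  rw [hderiv.deriv_eq,
    ((h.add_one.hasDerivAt_ordinaryHypergeometric hx).const_mul (a * b / c)).deriv]
  norm_num [add_assoc]

theorem hasSum_deriv_ordinaryHypergeometric (hx : |x| < 1) :
    HasSum (fun k => (k + 1) * ordinaryHypergeometricCoefficient a b c (k + 1) * x ^ k)
      (deriv (ordinaryHypergeometric a b c) x) := by
  rw [h.deriv_ordinaryHypergeometric hx]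
  refine ((h.add_one.hasSum_ordinaryHypergeometric hx).mul_left (a * b / c)).congr_fun
    fun k => ?_
  rw [succ_mul_ordinaryHypergeometricCoefficient_succ]
  ring

theorem hasSum_deriv_deriv_ordinaryHypergeometric (hx : |x| < 1) :
    HasSum (fun k => (k + 2) * (k + 1) * ordinaryHypergeometricCoefficient a b c (k + 2) * x ^ k)
      (deriv (deriv (ordinaryHypergeometric a b c)) x) := by
  rw [h.deriv_deriv_ordinaryHypergeometric hx]
  have hF₂ := h.add_one.add_one.hasSum_ordinaryHypergeometric hx
  simp only [add_assoc, one_add_one_eq_two] at hF₂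
  refine ((hF₂.mul_left _).mul_left (a * b / c)).congr_fun fun k => ?_
  have h₁ := succ_mul_ordinaryHypergeometricCoefficient_succ a b c (k + 1)
  have h₂ := succ_mul_ordinaryHypergeometricCoefficient_succ (a + 1) (b + 1) (c + 1) k
  simp only [add_assoc, one_add_one_eq_two] at h₂
  push_cast at h₁
  linear_combination (k + 1 : ℝ) * x ^ k * h₁ + a * b / c * x ^ k * h₂

theorem ordinaryHypergeometric_ode (hx : |x| < 1) :
    x * (1 - x) * deriv (deriv (ordinaryHypergeometric a b c)) x +
      (c - (a + b + 1) * x) * deriv (ordinaryHypergeometric a b c) x =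
        a * b * ordinaryHypergeometric a b c x := by
  have hF := h.hasSum_ordinaryHypergeometric hx
  have hF' := h.hasSum_deriv_ordinaryHypergeometric hx
  have hF'' := h.hasSum_deriv_deriv_ordinaryHypergeometric hx
  set t := ordinaryHypergeometricCoefficient a b c
  set F'' := deriv (deriv (ordinaryHypergeometric a b c)) x
  set F' := deriv (ordinaryHypergeometric a b c) x
  have hxF'' : HasSum (fun k => k * (k + 1) * t (k + 1) * x ^ k) (x * F'') :=
    HasSum.mul_pow_of_succ (g := fun k : ℕ => k * (k + 1) * t (k + 1))
      (hF''.congr_fun fun k => by push_cast; ring) (by simp)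
  have hxF' : HasSum (fun k => k * t k * x ^ k) (x * F') :=
    HasSum.mul_pow_of_succ (g := fun k : ℕ => k * t k)
      (hF'.congr_fun fun k => by push_cast; ring) (by simp)
  have hxxF'' : HasSum (fun k => k * (k - 1) * t k * x ^ k) (x * (x * F'')) :=
    HasSum.mul_pow_of_succ (g := fun k : ℕ => k * (k - 1) * t k)
      (hxF''.congr_fun fun k => by push_cast; ring) (by simp)
  have hzero := (hxF''.add (hF'.mul_left c)).sub
    ((hxxF''.add (hxF'.mul_left (a + b + 1))).add (hF.mul_left (a * b)))
  have hcoeff : ∀ k : ℕ, (k * (k + 1) * t (k + 1) * x ^ k + c * ((k + 1) * t (k + 1) * x ^ k)) -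
      (k * (k - 1) * t k * x ^ k + (a + b + 1) * (k * t k * x ^ k) + a * b * (t k * x ^ k)) = 0 :=
    fun k => by
      have hck : c + k ≠ 0 := fun e => (h k).2.2 (by linarith)
      linear_combination x ^ k * ordinaryHypergeometricCoefficient_succ_recurrence a b hck
  simp only [hcoeff] at hzero
  linear_combination -hasSum_zero.unique hzero

end AvoidNonposInts

theorem ordinaryHypergeometricCoefficient_pos {a b c : ℝ} (ha : 0 < a) (hb : 0 < b) (hc : 0 < c)
    (k : ℕ) : 0 < ordinaryHypergeometricCoefficient a b c k := by
  have := ascPochhammer_pos k a ha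
  have := ascPochhammer_pos k b hb
  have := ascPochhammer_pos k c hc
  positivity

theorem one_le_ordinaryHypergeometric {a b c x : ℝ} (ha : 0 < a) (hb : 0 < b) (hc : 0 < c)
    (hx₀ : 0 ≤ x) (hx₁ : x < 1) : 1 ≤ ordinaryHypergeometric a b c x := by
  have h : AvoidNonposInts a b c := avoidNonposInts_of_neg_one_lt (by linarith) (by linarith)
    (by linarith) ha.ne' hb.ne' hc.ne'
  have hsum := h.hasSum_ordinaryHypergeometric (abs_lt.mpr ⟨by linarith, hx₁⟩)
  simpa [ordinaryHypergeometricCoefficient] using le_hasSum hsum 0 fun k _ =>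
    mul_nonneg (ordinaryHypergeometricCoefficient_pos ha hb hc k).le (pow_nonneg hx₀ k)

theorem ordinaryHypergeometric_pos_deriv_neg_deriv_deriv_neg {a b c x : ℝ} (ha : 0 < a)
    (hb₁ : -1 < b) (hb₀ : b < 0) (hc : a + b + 1 ≤ c) (hx : x ∈ Ioo (0 : ℝ) 1) :
    0 < ordinaryHypergeometric a b c x ∧ deriv (ordinaryHypergeometric a b c) x < 0 ∧
      deriv (deriv (ordinaryHypergeometric a b c)) x < 0 := by
  obtain ⟨hx₀, hx₁⟩ := hx
  have hc₀ : 0 < c := by linarith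
  have h : AvoidNonposInts a b c := avoidNonposInts_of_neg_one_lt (by linarith) hb₁
    (by linarith) ha.ne' hb₀.ne hc₀.ne'
  have hxabs : |x| < 1 := abs_lt.mpr ⟨by linarith, hx₁⟩
  have hab : a * b / c < 0 := div_neg_of_neg_of_pos (mul_neg_of_pos_of_neg ha hb₀) hc₀
  have hF₁ := one_le_ordinaryHypergeometric (a := a + 1) (b := b + 1) (c := c + 1)
    (by linarith) (by linarith) (by linarith) hx₀.le hx₁
  have hF₂ := one_le_ordinaryHypergeometric (a := a + 2) (b := b + 2) (c := c + 2)
    (by linarith) (by linarith) (by linarith) hx₀.le hx₁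
  have hD₁ : deriv (ordinaryHypergeometric a b c) x < 0 := by
    rw [h.deriv_ordinaryHypergeometric hxabs]
    exact mul_neg_of_neg_of_pos hab (by linarith)
  have hD₂ : deriv (deriv (ordinaryHypergeometric a b c)) x < 0 := by
    rw [h.deriv_deriv_ordinaryHypergeometric hxabs]
    refine mul_neg_of_neg_of_pos hab (mul_pos (div_pos (by nlinarith) (by linarith)) ?_)
    linarith
  have hweight : 0 < c - (a + b + 1) * x := by nlinarith
  refine ⟨?_, hD₁, hD₂⟩
  refine pos_of_mul_neg_right (a := a * b) ?_ (mul_neg_of_pos_of_neg ha hb₀).le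
  rw [← h.ordinaryHypergeometric_ode hxabs]
  exact add_neg (mul_neg_of_pos_of_neg (mul_pos hx₀ (sub_pos.mpr hx₁)) hD₂)
    (mul_neg_of_pos_of_neg hweight hD₁)

theorem cp_eq {p : ℝ} (hp : p ≠ 1) : cp p = ap p + bp p + 3 / 2 := by
  have : p - 1 ≠ 0 := sub_ne_zero.mpr hp
  rw [cp, ap, bp]
  field_simp
  ring

section Parameters

variable {p : ℝ} (hp₁ : 1 < p) (hp₃ : p < 3)
include hp₁ hp₃

theorem ap_pos : 0 < ap p := by
  have := Real.sqrt_nonneg (4 + 12 * (p - 1) - 3 * (p - 1) ^ 2)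
  unfold ap
  apply div_pos <;> linarith

theorem sq_sqrt_discr : Real.sqrt (4 + 12 * (p - 1) - 3 * (p - 1) ^ 2) ^ 2 =
    4 + 12 * (p - 1) - 3 * (p - 1) ^ 2 :=
  Real.sq_sqrt (by nlinarith)

theorem neg_one_lt_bp : -1 < bp p := by
  have hs := sq_sqrt_discr hp₁ hp₃
  have := Real.sqrt_nonneg (4 + 12 * (p - 1) - 3 * (p - 1) ^ 2)
  rw [bp, lt_div_iff₀ (by linarith)]
  nlinarith

theorem bp_neg : bp p < 0 := by
  have hs := sq_sqrt_discr hp₁ hp₃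
  have := Real.sqrt_nonneg (4 + 12 * (p - 1) - 3 * (p - 1) ^ 2)
  rw [bp, div_lt_iff₀ (by linarith)]
  nlinarith

end Parameters

/-- `Υ > 0`, `Υ' < 0` and `Υ'' < 0` on `(0,1)`. -/
theorem stmt_6 (p : ℝ) (hp1 : 1 < p) (hp3 : p < 3) :
    ∀ x ∈ Set.Ioo (0 : ℝ) 1,
      0 < Ups p x ∧ deriv (Ups p) x < 0 ∧ deriv (deriv (Ups p)) x < 0 := by
  have hUps : Ups p = ordinaryHypergeometric (ap p) (bp p) (cp p) :=
    hyp_eq_ordinaryHypergeometric _ _ _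
  rw [hUps]
  exact fun x hx => ordinaryHypergeometric_pos_deriv_neg_deriv_deriv_neg (ap_pos hp1 hp3)
    (neg_one_lt_bp hp1 hp3) (bp_neg hp1 hp3) (by linarith [cp_eq hp1.ne']) hx
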